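/- arXiv:2309.13873 — 2 statements merged into one kernel-verified Lean document; each statement's English description precedes it below -/
import Mathlib

section
/- Consider the LTI system x_{k+1} = A x_k + W w_k, y_k = C x_k + V v_k with w_k ∈ [w̲, w̄] and v_k ∈ [v̲, v̄] componentwise for all k, and x̲_0 ≤ x_0 ≤ x̄_0. For any gain matrix L, the framer system x̲_{k+1} = (A−LC)⁺ x̲_k − (A−LC)⁻ x̄_k + L y_k + W⁺ w̲ − W⁻ w̄ + (LV)⁻ v̲ − (LV)⁺ v̄ and x̄_{k+1} = (A−LC)⁺ x̄_k − (A−LC)⁻ x̲_k + L y_k + W⁺ w̄ − W⁻ w̲ + (LV)⁻ v̄ − (LV)⁺ v̲, initialized at (x̲_0, x̄_0), satisfies x̲_k ≤ x_k ≤ x̄_k componentwise for all k ≥ 0. -/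
open Matrix

/-- Entrywise positive part of a matrix: `M⁺ = max(M, 0)`. -/
noncomputable def mpos {p m : ℕ} (A : Matrix (Fin p) (Fin m) ℝ) : Matrix (Fin p) (Fin m) ℝ :=
  fun i j => max (A i j) 0

/-- Entrywise negative part of a matrix: `M⁻ = M⁺ − M`. -/
noncomputable def mneg {p m : ℕ} (A : Matrix (Fin p) (Fin m) ℝ) : Matrix (Fin p) (Fin m) ℝ :=
  mpos A - A

lemma mpos_neg {p m : ℕ} (A : Matrix (Fin p) (Fin m) ℝ) : mpos (-A) = mneg A := by
  funext i j
  simp [mpos, mneg]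
  rcases le_total (A i j) 0 with h | h <;> simp [max_eq_left, max_eq_right, h] <;> linarith

lemma mneg_neg {p m : ℕ} (A : Matrix (Fin p) (Fin m) ℝ) : mneg (-A) = mpos A := by
  funext i j
  have := congrFun (congrFun (mpos_neg A) i) j
  simp [mneg, mpos] at this ⊢
  rcases le_total (A i j) 0 with h | h <;> simp [max_eq_left, max_eq_right, h] <;> linarith

lemma framer_lb {p q : ℕ} (M : Matrix (Fin p) (Fin q) ℝ) (a b c : Fin q → ℝ)
    (hac : a ≤ c) (hcb : c ≤ b) :
    mpos M *ᵥ a - mneg M *ᵥ b ≤ M *ᵥ c := by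
  intro i
  simp only [Pi.sub_apply, mulVec, dotProduct, ← Finset.sum_sub_distrib]
  apply Finset.sum_le_sum
  intro j _
  have h1 : 0 ≤ mpos M i j := le_max_right _ _
  have h2 : 0 ≤ mneg M i j := by
    simp [mneg, mpos]
  have hM : M i j = mpos M i j - mneg M i j := by simp [mneg]
  have e1 : mpos M i j * a j ≤ mpos M i j * c j := mul_le_mul_of_nonneg_left (hac j) h1
  have e2 : mneg M i j * c j ≤ mneg M i j * b j := mul_le_mul_of_nonneg_left (hcb j) h2
  have e3 : M i j * c j = mpos M i j * c j - mneg M i j * c j := by rw [hM]; ring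
  linarith

lemma framer_ub {p q : ℕ} (M : Matrix (Fin p) (Fin q) ℝ) (a b c : Fin q → ℝ)
    (hac : a ≤ c) (hcb : c ≤ b) :
    M *ᵥ c ≤ mpos M *ᵥ b - mneg M *ᵥ a := by
  have := framer_lb (-M) a b c hac hcb
  rw [mpos_neg, mneg_neg, neg_mulVec] at this
  intro i
  have := this i
  simp at this ⊢
  linarith

theorem framer_property {n nw m nv : ℕ}
    (A : Matrix (Fin n) (Fin n) ℝ) (W : Matrix (Fin n) (Fin nw) ℝ)
    (C : Matrix (Fin m) (Fin n) ℝ) (V : Matrix (Fin m) (Fin nv) ℝ)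
    (L : Matrix (Fin n) (Fin m) ℝ)
    (x xlo xhi : ℕ → Fin n → ℝ) (w : ℕ → Fin nw → ℝ) (v : ℕ → Fin nv → ℝ)
    (y : ℕ → Fin m → ℝ)
    (wlo whi : Fin nw → ℝ) (vlo vhi : Fin nv → ℝ)
    (hw : ∀ k, wlo ≤ w k ∧ w k ≤ whi)
    (hv : ∀ k, vlo ≤ v k ∧ v k ≤ vhi)
    (hdyn : ∀ k, x (k + 1) = A *ᵥ x k + W *ᵥ w k)
    (hy : ∀ k, y k = C *ᵥ x k + V *ᵥ v k)
    (h0 : xlo 0 ≤ x 0 ∧ x 0 ≤ xhi 0)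
    (hlo : ∀ k, xlo (k + 1) =
      mpos (A - L * C) *ᵥ xlo k - mneg (A - L * C) *ᵥ xhi k + L *ᵥ y k
        + (mpos W *ᵥ wlo - mneg W *ᵥ whi) + (mneg (L * V) *ᵥ vlo - mpos (L * V) *ᵥ vhi))
    (hhi : ∀ k, xhi (k + 1) =
      mpos (A - L * C) *ᵥ xhi k - mneg (A - L * C) *ᵥ xlo k + L *ᵥ y k
        + (mpos W *ᵥ whi - mneg W *ᵥ wlo) + (mneg (L * V) *ᵥ vhi - mpos (L * V) *ᵥ vlo)) :
    ∀ k, xlo k ≤ x k ∧ x k ≤ xhi k := by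
  intro k
  induction k with
  | zero => exact h0
  | succ k ih =>
    obtain ⟨ih1, ih2⟩ := ih
    -- decomposition of x (k+1)
    have hx : x (k + 1) = (A - L * C) *ᵥ x k + L *ᵥ y k + W *ᵥ w k + (-(L * V)) *ᵥ v k := by
      rw [hdyn k, hy k]
      simp [sub_mulVec, mulVec_add, neg_mulVec, ← mulVec_mulVec]
      abel
    have hM1 := framer_lb (A - L * C) (xlo k) (xhi k) (x k) ih1 ih2
    have hM2 := framer_ub (A - L * C) (xlo k) (xhi k) (x k) ih1 ih2
    have hW1 := framer_lb W wlo whi (w k) (hw k).1 (hw k).2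
    have hW2 := framer_ub W wlo whi (w k) (hw k).1 (hw k).2
    have hV1 := framer_lb (-(L * V)) vlo vhi (v k) (hv k).1 (hv k).2
    have hV2 := framer_ub (-(L * V)) vlo vhi (v k) (hv k).1 (hv k).2
    rw [mpos_neg, mneg_neg] at hV1 hV2
    constructor
    · intro i
      rw [hlo k, hx]
      have := hM1 i; have := hW1 i; have := hV1 i
      simp only [Pi.add_apply, Pi.sub_apply] at *
      linarith
    · intro i
      rw [hhi k, hx]
      have := hM2 i; have := hW2 i; have := hV2 i
      simp only [Pi.add_apply, Pi.sub_apply] at *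
      linarith
end

section
/- Suppose the framer error recursion e_{k+1} = |A − LC| e_k + Λ δ_λ satisfies ‖e_k‖₂ ≤ γ‖δ_λ‖₂ for all k, and the center-difference recursion δ^c_{k+1} = (A−LC)δ^c_k + L(y_k − y'_k) with δ^c_0 = 0 satisfies ‖δ^c_k‖₂ ≤ η‖y−y'‖_{ℓ∞} ≤ ηρ. Then for z_k ∈ [z̲_k, z̄_k] and z'_k ∈ [z̲'_k, z̄'_k] obtained from the framers via Γ, we have ‖z_k − z'_k‖₂ ≤ σ_max(|Γ|) γ ‖δ_λ‖₂ + σ_max(Γ) η ρ. -/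
open Matrix

/-- Entrywise absolute value of a matrix: `|M| = M⁺ + M⁻`. -/
noncomputable def matAbs {p m : ℕ} (A : Matrix (Fin p) (Fin m) ℝ) : Matrix (Fin p) (Fin m) ℝ :=
  mpos A + mneg A

/-- The Euclidean norm on `Fin q → ℝ`. -/
noncomputable def norm2 {q : ℕ} (v : Fin q → ℝ) : ℝ :=
  Real.sqrt (∑ i, (v i) ^ 2)
/-!
With centre `c = (x̲ + x̄)/2` and half-width `w = (x̄ - x̲)/2` of the state interval, the identities
`Γ = Γ⁺ - Γ⁻` and `|Γ| = Γ⁺ + Γ⁻` show that the output interval `[Γ⁺x̲ - Γ⁻x̄, Γ⁺x̄ - Γ⁻x̲]` is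
exactly `Γ c ± |Γ| w`; so each of its points `z` has `‖z - Γ c‖₂ ≤ ‖|Γ| w‖₂ ≤ σ_max(|Γ|) ‖e‖₂ / 2`.
The triangle inequality through the two centres `Γ c`, `Γ c'` then gives the bound, the centres
contributing `‖Γ (c - c')‖₂ ≤ σ_max(Γ) η ρ`.
-/

lemma norm2_eq_norm_toLp {q : ℕ} (v : Fin q → ℝ) : norm2 v = ‖WithLp.toLp 2 v‖ := by
  simp [norm2, EuclideanSpace.norm_eq, sq_abs]

lemma norm2_nonneg {q : ℕ} (v : Fin q → ℝ) : 0 ≤ norm2 v := Real.sqrt_nonneg _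

lemma norm2_add_le {q : ℕ} (u v : Fin q → ℝ) : norm2 (u + v) ≤ norm2 u + norm2 v := by
  simpa only [norm2_eq_norm_toLp, WithLp.toLp_add] using norm_add_le _ _

lemma norm2_sub_le {q : ℕ} (u v : Fin q → ℝ) : norm2 (u - v) ≤ norm2 u + norm2 v := by
  simpa only [norm2_eq_norm_toLp, WithLp.toLp_sub] using norm_sub_le _ _

lemma norm2_smul {q : ℕ} (c : ℝ) (v : Fin q → ℝ) : norm2 (c • v) = |c| * norm2 v := by
  simp only [norm2_eq_norm_toLp, WithLp.toLp_smul, norm_smul, Real.norm_eq_abs]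

lemma norm2_le_of_abs_le {q : ℕ} {u v : Fin q → ℝ} (h : ∀ i, |u i| ≤ v i) :
    norm2 u ≤ norm2 v :=
  Real.sqrt_le_sqrt <| Finset.sum_le_sum fun i _ =>
    sq_le_sq' (abs_le.mp (h i)).1 (abs_le.mp (h i)).2

lemma norm2_mulVec_le {q n : ℕ} {M : Matrix (Fin q) (Fin n) ℝ} {σ : ℝ}
    (hσ : σ ∈ upperBounds {c | ∃ x : Fin n → ℝ, norm2 x = 1 ∧ c = norm2 (M *ᵥ x)})
    (v : Fin n → ℝ) : norm2 (M *ᵥ v) ≤ σ * norm2 v := by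
  obtain hv | hv := (norm2_nonneg v).eq_or_lt
  · obtain rfl : v = 0 := by
      simpa [norm2_eq_norm_toLp] using hv.symm
    simp [norm2]
  · have hunit : norm2 ((norm2 v)⁻¹ • v) = 1 := by
      rw [norm2_smul, abs_of_pos (inv_pos.mpr hv), inv_mul_cancel₀ hv.ne']
    have hle := hσ ⟨_, hunit, rfl⟩
    rw [mulVec_smul, norm2_smul, abs_of_pos (inv_pos.mpr hv), inv_mul_le_iff₀ hv] at hle
    linarith

lemma nonneg_of_isGreatest_norm2_mulVec {q n : ℕ} {M : Matrix (Fin q) (Fin n) ℝ} {σ : ℝ}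
    (hσ : IsGreatest {c | ∃ x : Fin n → ℝ, norm2 x = 1 ∧ c = norm2 (M *ᵥ x)} σ) : 0 ≤ σ := by
  obtain ⟨x, -, rfl⟩ := hσ.1
  exact norm2_nonneg _

lemma mpos_mulVec_sub_mneg_mulVec {p m : ℕ} (A : Matrix (Fin p) (Fin m) ℝ) (v : Fin m → ℝ) :
    mpos A *ᵥ v - mneg A *ᵥ v = A *ᵥ v := by
  rw [← sub_mulVec, mneg, sub_sub_cancel]

lemma abs_sub_mulVec_midpoint_le {p m : ℕ} (A : Matrix (Fin p) (Fin m) ℝ) {lo hi : Fin m → ℝ}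
    {z : Fin p → ℝ} (hz : mpos A *ᵥ lo - mneg A *ᵥ hi ≤ z ∧ z ≤ mpos A *ᵥ hi - mneg A *ᵥ lo)
    (i : Fin p) : |(z - A *ᵥ ((lo + hi) / 2)) i| ≤ (matAbs A *ᵥ ((hi - lo) / 2)) i := by
  set w := (hi - lo) / 2
  have hlo (B : Matrix (Fin p) (Fin m) ℝ) : B *ᵥ ((lo + hi) / 2) = B *ᵥ lo + B *ᵥ w := by
    rw [← mulVec_add]; congr 1
    ext j; simp only [w, Pi.div_apply, Pi.add_apply, Pi.sub_apply, Pi.ofNat_apply]; ring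
  have hhi (B : Matrix (Fin p) (Fin m) ℝ) : B *ᵥ ((lo + hi) / 2) = B *ᵥ hi - B *ᵥ w := by
    rw [← mulVec_sub]; congr 1
    ext j; simp only [w, Pi.div_apply, Pi.add_apply, Pi.sub_apply, Pi.ofNat_apply]; ring
  have hupper : mpos A *ᵥ hi - mneg A *ᵥ lo - A *ᵥ ((lo + hi) / 2) = matAbs A *ᵥ w := by
    rw [← mpos_mulVec_sub_mneg_mulVec A ((lo + hi) / 2),
      hhi (mpos A), hlo (mneg A), matAbs, add_mulVec]
    abel
  have hlower : mpos A *ᵥ lo - mneg A *ᵥ hi - A *ᵥ ((lo + hi) / 2) = -(matAbs A *ᵥ w) := by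
    rw [← mpos_mulVec_sub_mneg_mulVec A ((lo + hi) / 2),
      hlo (mpos A), hhi (mneg A), matAbs, add_mulVec]
    abel
  have hu := congrFun hupper i
  have hl := congrFun hlower i
  have h₁ := hz.1 i
  have h₂ := hz.2 i
  simp only [Pi.sub_apply, Pi.neg_apply] at hu hl h₁ h₂ ⊢
  rw [abs_le]
  constructor <;> linarith

lemma norm2_sub_mulVec_midpoint_le {p m : ℕ} {A : Matrix (Fin p) (Fin m) ℝ} {σ : ℝ}
    (hσ : σ ∈ upperBounds {c | ∃ x : Fin m → ℝ, norm2 x = 1 ∧ c = norm2 (matAbs A *ᵥ x)})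
    {lo hi : Fin m → ℝ} {z : Fin p → ℝ}
    (hz : mpos A *ᵥ lo - mneg A *ᵥ hi ≤ z ∧ z ≤ mpos A *ᵥ hi - mneg A *ᵥ lo) :
    norm2 (z - A *ᵥ ((lo + hi) / 2)) ≤ σ * norm2 (hi - lo) / 2 := by
  have hw : (hi - lo) / 2 = (2⁻¹ : ℝ) • (hi - lo) := by
    ext j
    simp only [Pi.div_apply, Pi.sub_apply, Pi.ofNat_apply, Pi.smul_apply, smul_eq_mul]
    ring
  calc norm2 (z - A *ᵥ ((lo + hi) / 2)) ≤ norm2 (matAbs A *ᵥ ((hi - lo) / 2)) :=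
        norm2_le_of_abs_le (abs_sub_mulVec_midpoint_le A hz)
    _ ≤ σ * norm2 ((hi - lo) / 2) := norm2_mulVec_le hσ _
    _ = σ * norm2 (hi - lo) / 2 := by
        rw [hw, norm2_smul, abs_of_pos (by norm_num)]; ring

theorem output_distance_bound {q n : ℕ}
    (Γ : Matrix (Fin q) (Fin n) ℝ)
    (σ₁ σ₂ γ η ρ nδ : ℝ)
    (hσ₁ : IsGreatest {c | ∃ x : Fin n → ℝ, norm2 x = 1 ∧ c = norm2 (matAbs Γ *ᵥ x)} σ₁)
    (hσ₂ : IsGreatest {c | ∃ x : Fin n → ℝ, norm2 x = 1 ∧ c = norm2 (Γ *ᵥ x)} σ₂)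
    (xlo xhi xlo' xhi' : Fin n → ℝ) (e : Fin n → ℝ)
    (hwidth : xhi - xlo = e) (hwidth' : xhi' - xlo' = e)
    (he : norm2 e ≤ γ * nδ)
    (hc : norm2 ((xlo + xhi) / 2 - (xlo' + xhi') / 2) ≤ η * ρ)
    (z z' : Fin q → ℝ)
    (hz : mpos Γ *ᵥ xlo - mneg Γ *ᵥ xhi ≤ z ∧ z ≤ mpos Γ *ᵥ xhi - mneg Γ *ᵥ xlo)
    (hz' : mpos Γ *ᵥ xlo' - mneg Γ *ᵥ xhi' ≤ z' ∧ z' ≤ mpos Γ *ᵥ xhi' - mneg Γ *ᵥ xlo') :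
    norm2 (z - z') ≤ σ₁ * γ * nδ + σ₂ * η * ρ := by
  set c := (xlo + xhi) / 2
  set c' := (xlo' + xhi') / 2
  have hz_c : norm2 (z - Γ *ᵥ c) ≤ σ₁ * norm2 e / 2 :=
    hwidth ▸ norm2_sub_mulVec_midpoint_le hσ₁.2 hz
  have hz'_c' : norm2 (z' - Γ *ᵥ c') ≤ σ₁ * norm2 e / 2 :=
    hwidth' ▸ norm2_sub_mulVec_midpoint_le hσ₁.2 hz'
  have hcentres : norm2 (Γ *ᵥ (c - c')) ≤ σ₂ * (η * ρ) :=
    (norm2_mulVec_le hσ₂.2 _).trans <|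
      mul_le_mul_of_nonneg_left hc (nonneg_of_isGreatest_norm2_mulVec hσ₂)
  have hwidths : σ₁ * norm2 e ≤ σ₁ * (γ * nδ) :=
    mul_le_mul_of_nonneg_left he (nonneg_of_isGreatest_norm2_mulVec hσ₁)
  have hsplit : z - z' = (z - Γ *ᵥ c) - (z' - Γ *ᵥ c') + Γ *ᵥ (c - c') := by
    rw [mulVec_sub]; abel
  calc norm2 (z - z')
      ≤ norm2 (z - Γ *ᵥ c) + norm2 (z' - Γ *ᵥ c') + norm2 (Γ *ᵥ (c - c')) := by
        rw [hsplit]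
        exact (norm2_add_le _ _).trans (add_le_add_left (norm2_sub_le _ _) _)
    _ ≤ σ₁ * γ * nδ + σ₂ * η * ρ := by linarith
end
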